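/- Let 0 < γ < η, μ ∈ ℝ, and α, β ∈ (0,1). Let ν be the pushforward of the product measure (Gaussian with mean μ and variance η² − γ²) × (Gaussian with mean 0 and variance γ²) under the map (ŷ, e) ↦ (ŷ, ŷ + e). Then ν of the set {(ŷ, y) : ŷ ≤ μ + √(η²−γ²)·Φ⁻¹(α) and y ≤ μ + η·Φ⁻¹(β)} equals Φ₂(Φ⁻¹(α), Φ⁻¹(β); ρ), where ρ = √(η²−γ²)/η. Consequently the policy value V(π*) = P(Ŷ ≤ q_α(Ŷ) | Y ≤ q_β(Y)) equals Φ₂(Φ⁻¹(α), Φ⁻¹(β); ρ)/β. -/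

import Mathlib

open Real MeasureTheory Filter Topology

/-- The standard normal density φ(x) = (2π)^{-1/2} exp(-x²/2). -/
noncomputable def stdNormalPDF (x : ℝ) : ℝ :=
  (Real.sqrt (2 * Real.pi))⁻¹ * Real.exp (-x ^ 2 / 2)

/-- The standard normal CDF Φ(x) = ∫_{-∞}^x φ(u) du. -/
noncomputable def stdNormalCDF (x : ℝ) : ℝ :=
  ∫ u in Set.Iic x, stdNormalPDF u

/-- The standard bivariate normal density with correlation ρ. -/
noncomputable def biNormalPDF (x y ρ : ℝ) : ℝ :=
  (2 * Real.pi * Real.sqrt (1 - ρ ^ 2))⁻¹ *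
    Real.exp (-(x ^ 2 - 2 * ρ * x * y + y ^ 2) / (2 * (1 - ρ ^ 2)))

/-- The standard bivariate normal CDF Φ₂(a, b; ρ). -/
noncomputable def biNormalCDF (a b ρ : ℝ) : ℝ :=
  ∫ x in Set.Iic a, ∫ y in Set.Iic b, biNormalPDF x y ρ

/-- The inverse Φ⁻¹ of the standard normal CDF on (0,1). -/
noncomputable def stdNormalCDFInv (p : ℝ) : ℝ :=
  Function.invFun stdNormalCDF p

open ProbabilityTheory

open Set

lemma stdNormalPDF_eq (x : ℝ) : stdNormalPDF x = gaussianPDFReal 0 1 x := by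
  simp [stdNormalPDF, gaussianPDFReal]

lemma stdNormalPDF_nonneg (x : ℝ) : 0 ≤ stdNormalPDF x := by
  rw [stdNormalPDF_eq]; exact gaussianPDFReal_nonneg 0 1 x

lemma integrable_stdNormalPDF : Integrable stdNormalPDF := by
  have := integrable_gaussianPDFReal 0 1
  refine this.congr (Filter.Eventually.of_forall fun x => (stdNormalPDF_eq x).symm)

lemma continuous_stdNormalPDF : Continuous stdNormalPDF := by
  unfold stdNormalPDF; fun_prop

lemma stdNormalCDF_nonneg (x : ℝ) : 0 ≤ stdNormalCDF x :=
  setIntegral_nonneg measurableSet_Iic fun u _ => stdNormalPDF_nonneg u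

lemma gaussianReal_std_Iic (d : ℝ) :
    gaussianReal 0 1 (Set.Iic d) = ENNReal.ofReal (stdNormalCDF d) := by
  rw [gaussianReal_apply_eq_integral 0 one_ne_zero]
  congr 1
  rw [stdNormalCDF]
  exact (setIntegral_congr_fun measurableSet_Iic fun x _ => stdNormalPDF_eq x).symm

lemma gaussianReal_Iic {v : ℝ} (hv : 0 < v) (m c : ℝ) :
    gaussianReal m v.toNNReal (Set.Iic c)
      = ENNReal.ofReal (stdNormalCDF ((c - m) / Real.sqrt v)) := by
  set s := Real.sqrt v with hs
  have hs0 : 0 < s := Real.sqrt_pos.mpr hv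
  have hsq : s ^ 2 = v := Real.sq_sqrt hv.le
  have h1 : (gaussianReal 0 1).map (s * ·) = gaussianReal 0 v.toNNReal := by
    rw [gaussianReal_map_const_mul s]
    congr 1
    · ring
    · rw [mul_one]
      ext
      simp [hsq, Real.coe_toNNReal _ hv.le]
  have h2 : (gaussianReal 0 v.toNNReal).map (· + m) = gaussianReal m v.toNNReal := by
    rw [gaussianReal_map_add_const m, zero_add]
  rw [← h2, Measure.map_apply (measurable_add_const m) measurableSet_Iic,
    Set.preimage_add_const_Iic, ← h1,
    Measure.map_apply (measurable_const_mul s) measurableSet_Iic,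
    Set.preimage_const_mul_Iic₀ _ hs0, gaussianReal_std_Iic]

lemma toNNReal_ne_zero_of_pos {v : ℝ} (hv : 0 < v) : v.toNNReal ≠ 0 :=
  ne_of_gt (Real.toNNReal_pos.mpr hv)

lemma integral_gaussianPDFReal_Iic {v : ℝ} (hv : 0 < v) (m c : ℝ) :
    ∫ y in Set.Iic c, gaussianPDFReal m v.toNNReal y
      = stdNormalCDF ((c - m) / Real.sqrt v) := by
  have h := gaussianReal_Iic hv m c
  rw [gaussianReal_apply_eq_integral m (toNNReal_ne_zero_of_pos hv)] at h
  rw [← ENNReal.ofReal_eq_ofReal_iff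
    (setIntegral_nonneg measurableSet_Iic fun y _ => gaussianPDFReal_nonneg _ _ y)
    (stdNormalCDF_nonneg _)]
  exact h

lemma continuous_stdNormalCDF : Continuous stdNormalCDF := by
  have hi := integrable_stdNormalPDF
  have key : ∀ x, stdNormalCDF x
      = (∫ u in Set.Iic (0:ℝ), stdNormalPDF u) + ∫ u in (0:ℝ)..x, stdNormalPDF u := by
    intro x
    have := intervalIntegral.integral_Iic_sub_Iic (hi.integrableOn) (hi.integrableOn) (a := 0) (b := x)
    rw [stdNormalCDF]; linarith
  simp only [funext key]
  exact continuous_const.add (intervalIntegral.continuous_primitive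
    (fun a b => hi.intervalIntegrable) 0)

lemma stdNormalCDF_eq_cdf (x : ℝ) : stdNormalCDF x = cdf (gaussianReal 0 1) x := by
  rw [cdf_eq_real, measureReal_def, gaussianReal_std_Iic, ENNReal.toReal_ofReal (stdNormalCDF_nonneg x)]

lemma stdNormalCDF_le_one (x : ℝ) : stdNormalCDF x ≤ 1 := by
  rw [stdNormalCDF_eq_cdf]; exact cdf_le_one _ _

lemma stdNormalCDF_surj {p : ℝ} (hp : p ∈ Set.Ioo (0:ℝ) 1) :
    ∃ x, stdNormalCDF x = p := by
  have hB : Tendsto stdNormalCDF atBot (𝓝 0) := by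
    simp only [funext stdNormalCDF_eq_cdf]; exact tendsto_cdf_atBot _
  have hT : Tendsto stdNormalCDF atTop (𝓝 1) := by
    simp only [funext stdNormalCDF_eq_cdf]; exact tendsto_cdf_atTop _
  obtain ⟨x₁, hx₁⟩ := (hB.eventually_lt_const hp.1).exists
  obtain ⟨x₂, hx₂, hx₂'⟩ := ((hT.eventually_const_lt hp.2).and (eventually_ge_atTop x₁)).exists
  obtain ⟨x, _, hx⟩ := intermediate_value_Icc hx₂' continuous_stdNormalCDF.continuousOn
    (Set.mem_Icc.mpr ⟨hx₁.le, hx₂.le⟩)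
  exact ⟨x, hx⟩

lemma stdNormalCDF_inv {p : ℝ} (hp : p ∈ Set.Ioo (0:ℝ) 1) :
    stdNormalCDF (stdNormalCDFInv p) = p :=
  Function.invFun_eq (stdNormalCDF_surj hp)

lemma biNormalPDF_eq (x y : ℝ) {ρ : ℝ} (h : ρ ^ 2 < 1) :
    biNormalPDF x y ρ = stdNormalPDF x * gaussianPDFReal (ρ * x) ((1 - ρ ^ 2).toNNReal) y := by
  have h1 : (0:ℝ) < 1 - ρ ^ 2 := by linarith
  have hc : (((1 - ρ ^ 2).toNNReal) : ℝ) = 1 - ρ ^ 2 := Real.coe_toNNReal _ h1.le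
  have h2π : (0:ℝ) < 2 * π := by positivity
  simp only [biNormalPDF, stdNormalPDF, gaussianPDFReal, hc]
  conv_rhs => rw [mul_mul_mul_comm]
  rw [← Real.exp_add]
  congr 1
  · rw [Real.sqrt_mul h2π.le, ← mul_inv, ← mul_assoc, Real.mul_self_sqrt h2π.le]
  · field_simp
    ring

lemma biNormalPDF_symm (x y ρ : ℝ) : biNormalPDF x y ρ = biNormalPDF y x ρ := by
  simp only [biNormalPDF]
  congr 2
  ring

lemma biNormalPDF_nonneg (x y ρ : ℝ) : 0 ≤ biNormalPDF x y ρ := by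
  have := Real.sqrt_nonneg (1 - ρ ^ 2)
  have := Real.pi_pos
  have : (0:ℝ) ≤ (2 * π * Real.sqrt (1 - ρ ^ 2))⁻¹ := by positivity
  exact mul_nonneg this (Real.exp_nonneg _)

lemma continuous_biNormalPDF (ρ : ℝ) : Continuous fun p : ℝ × ℝ => biNormalPDF p.1 p.2 ρ := by
  simp only [biNormalPDF]
  fun_prop

lemma integral_biNormalPDF_Iic (x b : ℝ) {ρ : ℝ} (h : ρ ^ 2 < 1) :
    ∫ y in Set.Iic b, biNormalPDF x y ρ
      = stdNormalPDF x * stdNormalCDF ((b - ρ * x) / Real.sqrt (1 - ρ ^ 2)) := by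
  have h1 : (0:ℝ) < 1 - ρ ^ 2 := by linarith
  simp_rw [biNormalPDF_eq x _ h]
  rw [integral_const_mul, integral_gaussianPDFReal_Iic h1 (ρ * x) b]

lemma integral_biNormalPDF_full (y : ℝ) {ρ : ℝ} (h : ρ ^ 2 < 1) :
    ∫ x, biNormalPDF x y ρ = stdNormalPDF y := by
  have h1 : (0:ℝ) < 1 - ρ ^ 2 := by linarith
  simp_rw [fun x => biNormalPDF_symm x y ρ, biNormalPDF_eq y _ h]
  rw [integral_const_mul, integral_gaussianPDFReal_eq_one (ρ * y) (toNNReal_ne_zero_of_pos h1),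
    mul_one]

lemma integral_comp_affine_full (f : ℝ → ℝ) {k : ℝ} (hk : 0 < k) (m : ℝ) :
    ∫ x, f x = k * ∫ u, f (m + k * u) := by
  have h1 : ∀ u : ℝ, f (m + k * u) = (fun v => f (v + m)) (k * u) := fun u => by
    simp [add_comm]
  simp_rw [h1]
  rw [MeasureTheory.Measure.integral_comp_mul_left (fun v => f (v + m)) k,
    MeasureTheory.integral_add_right_eq_self f m, abs_inv, abs_of_pos hk, smul_eq_mul,
    ← mul_assoc, mul_inv_cancel₀ hk.ne', one_mul]

lemma integral_comp_affine_Iic (f : ℝ → ℝ) {k : ℝ} (hk : 0 < k) (m c : ℝ) :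
    ∫ x in Set.Iic (m + k * c), f x = k * ∫ u in Set.Iic c, f (m + k * u) := by
  rw [← MeasureTheory.integral_indicator measurableSet_Iic,
    ← MeasureTheory.integral_indicator measurableSet_Iic]
  have key : ∀ u, Set.indicator (Set.Iic c) (fun u => f (m + k * u)) u
      = Set.indicator (Set.Iic (m + k * c)) f (m + k * u) := by
    intro u
    have hiff : u ∈ Set.Iic c ↔ m + k * u ∈ Set.Iic (m + k * c) := by
      simp only [Set.mem_Iic]
      constructor
      · intro hu; nlinarith
      · intro hu; nlinarith
    by_cases hu : u ≤ c
    · rw [Set.indicator_of_mem (Set.mem_Iic.mpr hu), Set.indicator_of_mem (hiff.mp hu)]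
    · rw [Set.indicator_of_notMem (fun hm => hu (Set.mem_Iic.mp hm)), Set.indicator_of_notMem (fun hm => hu (Set.mem_Iic.mp (hiff.mpr hm)))]
  simp_rw [key]
  exact integral_comp_affine_full (Set.indicator (Set.Iic (m + k * c)) f) hk m

lemma integrable_cdf_mul' {g : ℝ → ℝ} (hg : Continuous g) {f : ℝ → ℝ} {μ : Measure ℝ}
    (hf : Integrable f μ) :
    Integrable (fun u => stdNormalCDF (g u) * f u) μ :=
  hf.bdd_mul ((continuous_stdNormalCDF.comp hg).aestronglyMeasurable)
    (c := 1) (Filter.Eventually.of_forall fun x => by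
      rw [Real.norm_eq_abs, abs_of_nonneg (stdNormalCDF_nonneg _)]
      exact stdNormalCDF_le_one _)

lemma integrable_biNormalPDF_left (y : ℝ) {ρ : ℝ} (h : ρ ^ 2 < 1) :
    Integrable (fun x => biNormalPDF x y ρ) := by
  have : (fun x => biNormalPDF x y ρ)
      = fun x => stdNormalPDF y * gaussianPDFReal (ρ * y) ((1 - ρ ^ 2).toNNReal) x := by
    funext x; rw [biNormalPDF_symm, biNormalPDF_eq y x h]
  rw [this]
  exact (integrable_gaussianPDFReal _ _).const_mul _

lemma integrable_biNormalPDF_right (x : ℝ) {ρ : ℝ} (h : ρ ^ 2 < 1) :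
    Integrable (fun y => biNormalPDF x y ρ) := by
  have : (fun y => biNormalPDF x y ρ)
      = fun y => stdNormalPDF x * gaussianPDFReal (ρ * x) ((1 - ρ ^ 2).toNNReal) y := by
    funext y; rw [biNormalPDF_eq x y h]
  rw [this]
  exact (integrable_gaussianPDFReal _ _).const_mul _

lemma integral_mix (b : ℝ) {ρ : ℝ} (h : ρ ^ 2 < 1) :
    ∫ u, stdNormalCDF ((b - ρ * u) / Real.sqrt (1 - ρ ^ 2)) * stdNormalPDF u
      = stdNormalCDF b := by
  have hg : Continuous fun u : ℝ => (b - ρ * u) / Real.sqrt (1 - ρ ^ 2) := by fun_prop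
  have hmeas : Measurable fun p : ℝ × ℝ => ENNReal.ofReal (biNormalPDF p.1 p.2 ρ) :=
    (continuous_biNormalPDF ρ).measurable.ennreal_ofReal
  have h1 : ∀ u : ℝ, ENNReal.ofReal
        (stdNormalCDF ((b - ρ * u) / Real.sqrt (1 - ρ ^ 2)) * stdNormalPDF u)
      = ∫⁻ y in Set.Iic b, ENNReal.ofReal (biNormalPDF u y ρ) := by
    intro u
    rw [mul_comm, ← integral_biNormalPDF_Iic u b h,
      ofReal_integral_eq_lintegral_ofReal ((integrable_biNormalPDF_right u h).restrict)
        (Filter.Eventually.of_forall fun y => biNormalPDF_nonneg u y ρ)]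
  have h2 : ∀ y : ℝ, (∫⁻ u, ENNReal.ofReal (biNormalPDF u y ρ))
      = ENNReal.ofReal (stdNormalPDF y) := by
    intro y
    rw [← integral_biNormalPDF_full y h,
      ofReal_integral_eq_lintegral_ofReal (integrable_biNormalPDF_left y h)
        (Filter.Eventually.of_forall fun u => biNormalPDF_nonneg u y ρ)]
  have key : ENNReal.ofReal
        (∫ u, stdNormalCDF ((b - ρ * u) / Real.sqrt (1 - ρ ^ 2)) * stdNormalPDF u)
      = ENNReal.ofReal (stdNormalCDF b) := by
    rw [ofReal_integral_eq_lintegral_ofReal (integrable_cdf_mul' hg integrable_stdNormalPDF)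
      (Filter.Eventually.of_forall fun u =>
        mul_nonneg (stdNormalCDF_nonneg _) (stdNormalPDF_nonneg _))]
    calc ∫⁻ u, ENNReal.ofReal
          (stdNormalCDF ((b - ρ * u) / Real.sqrt (1 - ρ ^ 2)) * stdNormalPDF u)
        = ∫⁻ u, ∫⁻ y in Set.Iic b, ENNReal.ofReal (biNormalPDF u y ρ) := by
          simp_rw [h1]
      _ = ∫⁻ y in Set.Iic b, ∫⁻ u, ENNReal.ofReal (biNormalPDF u y ρ) := by
          exact lintegral_lintegral_swap hmeas.aemeasurable
      _ = ∫⁻ y in Set.Iic b, ENNReal.ofReal (stdNormalPDF y) := by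
          simp_rw [h2]
      _ = ENNReal.ofReal (stdNormalCDF b) := by
          rw [← ofReal_integral_eq_lintegral_ofReal integrable_stdNormalPDF.restrict
            (Filter.Eventually.of_forall fun y => stdNormalPDF_nonneg y)]
          rfl
  rw [← ENNReal.ofReal_eq_ofReal_iff (integral_nonneg fun u =>
      mul_nonneg (stdNormalCDF_nonneg _) (stdNormalPDF_nonneg _)) (stdNormalCDF_nonneg b)]
  exact key

/-- Let 0 < γ < η, μ ∈ ℝ, α, β ∈ (0,1). Let ν be the pushforward of
(Gaussian mean μ, variance η²−γ²) × (Gaussian mean 0, variance γ²) under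
(ŷ, e) ↦ (ŷ, ŷ + e). Then ν {(ŷ, y) : ŷ ≤ μ + √(η²−γ²)·Φ⁻¹(α) ∧ y ≤ μ + η·Φ⁻¹(β)}
= Φ₂(Φ⁻¹(α), Φ⁻¹(β); ρ) with ρ = √(η²−γ²)/η; consequently the policy value
P(Ŷ ≤ q_α(Ŷ) | Y ≤ q_β(Y)) equals Φ₂(Φ⁻¹(α), Φ⁻¹(β); ρ)/β. -/
theorem policyValue_gaussian (γ η μ α β : ℝ) (hγ : 0 < γ) (hγη : γ < η)
    (hα : α ∈ Set.Ioo (0 : ℝ) 1) (hβ : β ∈ Set.Ioo (0 : ℝ) 1)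
    (ν : Measure (ℝ × ℝ))
    (hν : ν = Measure.map (fun p : ℝ × ℝ => (p.1, p.1 + p.2))
      ((gaussianReal μ ((η ^ 2 - γ ^ 2).toNNReal)).prod (gaussianReal 0 ((γ ^ 2).toNNReal))))
    (ρ : ℝ) (hρ : ρ = Real.sqrt (η ^ 2 - γ ^ 2) / η) :
    ν {p : ℝ × ℝ | p.1 ≤ μ + Real.sqrt (η ^ 2 - γ ^ 2) * stdNormalCDFInv α ∧
        p.2 ≤ μ + η * stdNormalCDFInv β}
      = ENNReal.ofReal (biNormalCDF (stdNormalCDFInv α) (stdNormalCDFInv β) ρ) ∧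
    (ν {p : ℝ × ℝ | p.1 ≤ μ + Real.sqrt (η ^ 2 - γ ^ 2) * stdNormalCDFInv α ∧
        p.2 ≤ μ + η * stdNormalCDFInv β}).toReal /
      (ν {p : ℝ × ℝ | p.2 ≤ μ + η * stdNormalCDFInv β}).toReal
      = biNormalCDF (stdNormalCDFInv α) (stdNormalCDFInv β) ρ / β := by
  have hη : 0 < η := hγ.trans hγη
  set σ := Real.sqrt (η ^ 2 - γ ^ 2) with hσdef
  have hd : (0:ℝ) < η ^ 2 - γ ^ 2 := by nlinarith
  have hσ : 0 < σ := Real.sqrt_pos.mpr hd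
  have hs2 : σ ^ 2 = η ^ 2 - γ ^ 2 := Real.sq_sqrt hd.le
  have hσlt : σ < η := by nlinarith [hs2, hσ, hη]
  have hρ0 : 0 < ρ := by rw [hρ]; positivity
  have hρ1 : ρ < 1 := by rw [hρ]; rw [div_lt_one hη]; exact hσlt
  have hρ2 : ρ ^ 2 < 1 := by nlinarith
  set a := stdNormalCDFInv α with ha
  set b := stdNormalCDFInv β with hb
  set A := μ + σ * a with hA
  set B := μ + η * b with hB
  have hsρ : Real.sqrt (1 - ρ ^ 2) = γ / η := by
    have : 1 - ρ ^ 2 = (γ / η) ^ 2 := by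
      rw [hρ, div_pow, div_pow, hs2]
      field_simp
      ring
    rw [this, Real.sqrt_sq (by positivity)]
  have harg : ∀ u : ℝ, (B - (μ + σ * u)) / γ = (b - ρ * u) / Real.sqrt (1 - ρ ^ 2) := by
    intro u
    rw [hsρ, hρ, hB]
    field_simp
    ring
  set P := gaussianReal μ ((η ^ 2 - γ ^ 2).toNNReal) with hP
  set Q := gaussianReal 0 ((γ ^ 2).toNNReal) with hQ
  have hQcdf : ∀ t : ℝ, Q (Set.Iic t) = ENNReal.ofReal (stdNormalCDF (t / γ)) := by
    intro t
    rw [hQ, gaussianReal_Iic (by positivity) 0 t, sub_zero, Real.sqrt_sq hγ.le]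
  have hmap : Measurable fun p : ℝ × ℝ => (p.1, p.1 + p.2) :=
    measurable_fst.prodMk (measurable_fst.add measurable_snd)
  -- pointwise section computation for sets of the form {q | cond q.1 ∧ q.1 + q.2 ≤ B}
  have hΦcont : Continuous fun x : ℝ => (B - x) / γ := by fun_prop
  -- pdf substitution
  have hpdf : ∀ u : ℝ, gaussianPDFReal μ ((η ^ 2 - γ ^ 2).toNNReal) (μ + σ * u)
      = σ⁻¹ * stdNormalPDF u := by
    intro u
    have hco : (((η ^ 2 - γ ^ 2).toNNReal) : ℝ) = σ ^ 2 := by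
      rw [Real.coe_toNNReal _ hd.le, hs2]
    simp only [gaussianPDFReal, stdNormalPDF, hco]
    rw [show μ + σ * u - μ = σ * u by ring,
      show -(σ * u) ^ 2 / (2 * σ ^ 2) = -u ^ 2 / 2 by field_simp,
      Real.sqrt_mul (by positivity) (σ ^ 2), Real.sqrt_sq hσ.le, mul_inv]
    ring
  -- the integrand
  set F : ℝ → ℝ := fun x => stdNormalCDF ((B - x) / γ) * gaussianPDFReal μ ((η ^ 2 - γ ^ 2).toNNReal) x with hF
  have hFnonneg : ∀ x, 0 ≤ F x := fun x =>
    mul_nonneg (stdNormalCDF_nonneg _) (gaussianPDFReal_nonneg _ _ _)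
  have hFint : Integrable F := integrable_cdf_mul' hΦcont (integrable_gaussianPDFReal _ _)
  have hFsub : ∀ u : ℝ, F (μ + σ * u)
      = σ⁻¹ * (stdNormalCDF ((b - ρ * u) / Real.sqrt (1 - ρ ^ 2)) * stdNormalPDF u) := by
    intro u
    rw [hF]
    simp only
    rw [harg u, hpdf u]
    ring
  -- lintegral machinery : ν applied to sets
  have hv1 : ((η ^ 2 - γ ^ 2).toNNReal) ≠ 0 := toNNReal_ne_zero_of_pos hd
  have hPd : P = volume.withDensity (gaussianPDF μ ((η ^ 2 - γ ^ 2).toNNReal)) :=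
    gaussianReal_of_var_ne_zero μ hv1
  have hgmeas : Measurable fun x : ℝ => ENNReal.ofReal (stdNormalCDF ((B - x) / γ)) :=
    (continuous_stdNormalCDF.comp hΦcont).measurable.ennreal_ofReal
  have hmul : ∀ x : ℝ, gaussianPDF μ ((η ^ 2 - γ ^ 2).toNNReal) x
        * ENNReal.ofReal (stdNormalCDF ((B - x) / γ)) = ENNReal.ofReal (F x) := by
    intro x
    rw [gaussianPDF, hF]
    simp only
    rw [ENNReal.ofReal_mul' (gaussianPDFReal_nonneg _ _ _), mul_comm]
  -- Part A : the joint probability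
  have hS1 : MeasurableSet {p : ℝ × ℝ | p.1 ≤ A ∧ p.2 ≤ B} := by
    have : {p : ℝ × ℝ | p.1 ≤ A ∧ p.2 ≤ B}
        = (Prod.fst ⁻¹' Set.Iic A) ∩ (Prod.snd ⁻¹' Set.Iic B) := rfl
    rw [this]
    exact (measurable_fst measurableSet_Iic).inter (measurable_snd measurableSet_Iic)
  have hint1 : ν {p : ℝ × ℝ | p.1 ≤ A ∧ p.2 ≤ B}
      = ∫⁻ x in Set.Iic A, ENNReal.ofReal (stdNormalCDF ((B - x) / γ)) ∂P := by
    rw [hν, Measure.map_apply hmap hS1]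
    rw [show (fun p : ℝ × ℝ => (p.1, p.1 + p.2)) ⁻¹' {p : ℝ × ℝ | p.1 ≤ A ∧ p.2 ≤ B}
      = {q : ℝ × ℝ | q.1 ≤ A ∧ q.1 + q.2 ≤ B} from rfl]
    have hT1 : MeasurableSet {q : ℝ × ℝ | q.1 ≤ A ∧ q.1 + q.2 ≤ B} := by
      have : {q : ℝ × ℝ | q.1 ≤ A ∧ q.1 + q.2 ≤ B}
          = (Prod.fst ⁻¹' Set.Iic A) ∩ ((fun q : ℝ × ℝ => q.1 + q.2) ⁻¹' Set.Iic B) := rfl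
      rw [this]
      exact (measurable_fst measurableSet_Iic).inter
        ((measurable_fst.add measurable_snd) measurableSet_Iic)
    rw [Measure.prod_apply hT1]
    have hsec : ∀ x : ℝ, Q (Prod.mk x ⁻¹' {q : ℝ × ℝ | q.1 ≤ A ∧ q.1 + q.2 ≤ B})
        = Set.indicator (Set.Iic A)
            (fun x => ENNReal.ofReal (stdNormalCDF ((B - x) / γ))) x := by
      intro x
      rw [show Prod.mk x ⁻¹' {q : ℝ × ℝ | q.1 ≤ A ∧ q.1 + q.2 ≤ B}
        = {e : ℝ | x ≤ A ∧ x + e ≤ B} from rfl]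
      by_cases hx : x ≤ A
      · rw [Set.indicator_of_mem (Set.mem_Iic.mpr hx)]
        rw [show {e : ℝ | x ≤ A ∧ x + e ≤ B} = Set.Iic (B - x) by
          ext e
          simp only [Set.mem_setOf_eq, Set.mem_Iic, hx, true_and]
          constructor <;> intro he <;> linarith]
        exact hQcdf (B - x)
      · rw [Set.indicator_of_notMem (fun hm => hx (Set.mem_Iic.mp hm))]
        rw [show {e : ℝ | x ≤ A ∧ x + e ≤ B} = (∅ : Set ℝ) by
          ext e; simp [hx]]
        exact measure_empty
    simp_rw [hsec]
    rw [lintegral_indicator measurableSet_Iic]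
  have hA1 : ν {p : ℝ × ℝ | p.1 ≤ A ∧ p.2 ≤ B}
      = ENNReal.ofReal (∫ x in Set.Iic A, F x) := by
    rw [hint1, hPd, restrict_withDensity measurableSet_Iic,
      lintegral_withDensity_eq_lintegral_mul _ (measurable_gaussianPDF _ _) hgmeas]
    simp_rw [Pi.mul_apply, hmul]
    rw [← ofReal_integral_eq_lintegral_ofReal hFint.restrict
      (Filter.Eventually.of_forall hFnonneg)]
  -- real integral evaluation
  have hI1 : ∫ x in Set.Iic A, F x = biNormalCDF a b ρ := by
    rw [hA, integral_comp_affine_Iic F hσ μ a]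
    simp_rw [hFsub]
    rw [integral_const_mul, ← mul_assoc, mul_inv_cancel₀ hσ.ne', one_mul]
    rw [biNormalCDF]
    rw [show (∫ x in Set.Iic a, ∫ y in Set.Iic b, biNormalPDF x y ρ)
        = ∫ x in Set.Iic a,
            stdNormalPDF x * stdNormalCDF ((b - ρ * x) / Real.sqrt (1 - ρ ^ 2)) from
      setIntegral_congr_fun measurableSet_Iic fun x _ => integral_biNormalPDF_Iic x b hρ2]
    exact setIntegral_congr_fun measurableSet_Iic fun x _ => mul_comm _ _
  -- Part B : the marginal probability
  have hS2 : MeasurableSet {p : ℝ × ℝ | p.2 ≤ B} := measurable_snd measurableSet_Iic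
  have hint2 : ν {p : ℝ × ℝ | p.2 ≤ B}
      = ∫⁻ x, ENNReal.ofReal (stdNormalCDF ((B - x) / γ)) ∂P := by
    rw [hν, Measure.map_apply hmap hS2]
    rw [show (fun p : ℝ × ℝ => (p.1, p.1 + p.2)) ⁻¹' {p : ℝ × ℝ | p.2 ≤ B}
      = {q : ℝ × ℝ | q.1 + q.2 ≤ B} from rfl]
    rw [Measure.prod_apply (by
      have : {q : ℝ × ℝ | q.1 + q.2 ≤ B} = (fun q : ℝ × ℝ => q.1 + q.2) ⁻¹' Set.Iic B := rfl
      rw [this]; exact (measurable_fst.add measurable_snd) measurableSet_Iic)]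
    congr 1
    funext x
    rw [show Prod.mk x ⁻¹' {q : ℝ × ℝ | q.1 + q.2 ≤ B} = {e : ℝ | x + e ≤ B} from rfl]
    rw [show {e : ℝ | x + e ≤ B} = Set.Iic (B - x) by
      ext e
      simp only [Set.mem_setOf_eq, Set.mem_Iic]
      constructor <;> intro he <;> linarith]
    exact hQcdf (B - x)
  have hA2 : ν {p : ℝ × ℝ | p.2 ≤ B} = ENNReal.ofReal β := by
    rw [hint2, hPd, lintegral_withDensity_eq_lintegral_mul _ (measurable_gaussianPDF _ _) hgmeas]
    simp_rw [Pi.mul_apply, hmul]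
    rw [← ofReal_integral_eq_lintegral_ofReal hFint (Filter.Eventually.of_forall hFnonneg)]
    congr 1
    rw [integral_comp_affine_full F hσ μ]
    simp_rw [hFsub]
    rw [integral_const_mul, ← mul_assoc, mul_inv_cancel₀ hσ.ne', one_mul, integral_mix b hρ2,
      hb, stdNormalCDF_inv hβ]
  -- conclusion
  have hbi_nonneg : 0 ≤ biNormalCDF a b ρ := by
    rw [← hI1]
    exact setIntegral_nonneg measurableSet_Iic fun x _ => hFnonneg x
  constructor
  · rw [hA1, hI1]
  · rw [hA1, hI1, hA2, ENNReal.toReal_ofReal hbi_nonneg, ENNReal.toReal_ofReal hβ.1.le]
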